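/- Let Φ(z) = νz for all z ∈ ℂ with |ν| ≤ 1 and let Υ be an entire function on ℂ such that C_{Υ,Φ} is bounded on H_E(ζ). Then C_{Υ,Φ} is a co-isometry if and only if C_{Υ,Φ} is unitary. -/

import Mathlib

open Filter ContinuousLinearMap
open scoped ComplexConjugate

noncomputable section

/-- The weighted Hardy space of entire functions `H_E(ζ)`, realized as the Hilbert space of
coefficient sequences: an entire function `g z = ∑ bₙ zⁿ` with `∑ |bₙ|² ζₙ² < ∞` is encoded by
the `ℓ²`-sequence `n ↦ bₙ * ζₙ`.  With this identification the `lp`-inner product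
`⟪f, g⟫ = ∑ conj (f n) * g n` is exactly `∑ conj bₙ * cₙ * ζₙ²` (Mathlib's convention:
conjugate-linear in the first variable). -/
abbrev HE (_ζ : ℕ → ℝ) : Type := lp (fun _ : ℕ => ℂ) 2

/-- The `n`-th Taylor coefficient `bₙ` of an element of `H_E(ζ)`. -/
def HE.coeff (ζ : ℕ → ℝ) (f : HE ζ) (n : ℕ) : ℂ := f n / (ζ n : ℂ)

/-- The entire function `z ↦ ∑ bₙ zⁿ` represented by an element of `H_E(ζ)`. -/
def HE.toFun (ζ : ℕ → ℝ) (f : HE ζ) : ℂ → ℂ := fun z => ∑' n, HE.coeff ζ f n * z ^ n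

/-!
A co-isometry `T` has the right inverse `T*`, so it is surjective. If `T = C_{Υ,Φ}` is onto,
then writing the constant `1` as `Υ · (g ∘ Φ)` shows that `Υ` has no zeros, and writing `z` in
the same way shows `ν ≠ 0`, because `Υ · (g ∘ Φ)` is a multiple of `Υ` when `Φ ≡ 0`.
Then `Υ · (g ∘ Φ) = 0` forces the entire function `g` to vanish on `ν ℂ = ℂ`, hence `g = 0` by
uniqueness of Taylor coefficients. So `T` is injective, and a bijection with right inverse `T*`
also has left inverse `T*`.
-/

namespace HE

variable {ζ : ℕ → ℝ}

lemma eventually_pow_le (hζ : ∀ n, 0 < ζ n)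
    (hlim : Tendsto (fun n : ℕ => (ζ n) ^ ((1 : ℝ) / n)) atTop atTop) {r : ℝ} (hr : 0 ≤ r) :
    ∀ᶠ n : ℕ in atTop, r ^ n ≤ ζ n := by
  filter_upwards [hlim.eventually_ge_atTop r, eventually_ne_atTop 0] with n hn hn0
  calc r ^ n ≤ ((ζ n) ^ ((1 : ℝ) / n)) ^ n := pow_le_pow_left₀ hr hn n
    _ = ζ n := by rw [one_div, Real.rpow_inv_natCast_pow (hζ n).le hn0]

lemma norm_coeff (hζ : ∀ n, 0 < ζ n) (f : HE ζ) (n : ℕ) : ‖coeff ζ f n‖ = ‖f n‖ / ζ n := by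
  rw [coeff, norm_div, Complex.norm_real, Real.norm_of_nonneg (hζ n).le]

lemma hasFPowerSeriesOnBall_toFun (hζ : ∀ n, 0 < ζ n)
    (hlim : Tendsto (fun n : ℕ => (ζ n) ^ ((1 : ℝ) / n)) atTop atTop) (f : HE ζ) :
    HasFPowerSeriesOnBall (toFun ζ f) (FormalMultilinearSeries.ofScalars ℂ (coeff ζ f)) 0 ⊤ := by
  set p := FormalMultilinearSeries.ofScalars ℂ (coeff ζ f)
  have hradius : p.radius = ⊤ := by
    refine FormalMultilinearSeries.radius_eq_top_of_forall_nnreal_isBigO _ fun r => ?_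
    refine Asymptotics.IsBigO.of_bound ‖f‖ ?_
    filter_upwards [eventually_pow_le hζ hlim r.coe_nonneg] with n hn
    have hfn : ‖f n‖ ≤ ‖f‖ := lp.norm_apply_le_norm two_ne_zero f n
    rw [norm_one, mul_one, Real.norm_of_nonneg (by positivity),
      FormalMultilinearSeries.ofScalars_norm, norm_coeff hζ, div_mul_eq_mul_div,
      div_le_iff₀ (hζ n)]
    exact mul_le_mul hfn hn (by positivity) (norm_nonneg f)
  have hsum : p.sum = toFun ζ f := by
    funext z
    simp only [p, FormalMultilinearSeries.sum, FormalMultilinearSeries.ofScalars_apply_eq,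
      smul_eq_mul, toFun]
  simpa only [hsum, hradius] using p.hasFPowerSeriesOnBall (by simp [hradius])

lemma eq_zero_of_toFun_eq_zero (hζ : ∀ n, 0 < ζ n)
    (hlim : Tendsto (fun n : ℕ => (ζ n) ^ ((1 : ℝ) / n)) atTop atTop) {f : HE ζ}
    (h : toFun ζ f = 0) : f = 0 := by
  have hseries := (hasFPowerSeriesOnBall_toFun hζ hlim f).hasFPowerSeriesAt
  rw [h] at hseries
  have hcoeff : coeff ζ f = 0 :=
    (FormalMultilinearSeries.ofScalars_series_eq_zero ℂ).mp hseries.eq_zero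
  ext n
  simpa [coeff, (hζ n).ne'] using congrFun hcoeff n

@[simp]
lemma toFun_zero : toFun ζ 0 = 0 := by
  funext z
  simp [toFun, coeff]

lemma toFun_single (i : ℕ) (z : ℂ) : toFun ζ (lp.single 2 i 1) z = z ^ i / ζ i := by
  rw [toFun, tsum_eq_single i fun n hn => by simp [coeff, hn]]
  rw [coeff, lp.single_apply_self]
  ring

section WeightedComposition

variable {ν : ℂ} {Υ : ℂ → ℂ} {T : HE ζ →L[ℂ] HE ζ}

lemma weight_ne_zero_of_surjective (hζ : ∀ n, 0 < ζ n)
    (hT : ∀ f : HE ζ, ∀ z : ℂ, toFun ζ (T f) z = Υ z * toFun ζ f (ν * z))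
    (hsurj : Function.Surjective T) (z : ℂ) : Υ z ≠ 0 := by
  obtain ⟨g, hg⟩ := hsurj (lp.single 2 0 1)
  have hone : Υ z * toFun ζ g (ν * z) = 1 / ζ 0 := by
    rw [← hT, hg, toFun_single, pow_zero]
  exact left_ne_zero_of_mul (hone ▸ one_div_ne_zero (by exact_mod_cast (hζ 0).ne'))

lemma symbol_ne_zero_of_surjective (hζ : ∀ n, 0 < ζ n)
    (hT : ∀ f : HE ζ, ∀ z : ℂ, toFun ζ (T f) z = Υ z * toFun ζ f (ν * z))
    (hsurj : Function.Surjective T) : ν ≠ 0 := by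
  rintro rfl
  obtain ⟨g, hg⟩ := hsurj (lp.single 2 1 1)
  have hid : ∀ z, Υ z * toFun ζ g 0 = z / ζ 1 := fun z => by
    rw [← zero_mul z, ← hT, hg, toFun_single, pow_one]
  have hg0 : toFun ζ g 0 = 0 := by
    simpa [weight_ne_zero_of_surjective hζ hT hsurj 0] using hid 0
  simpa [hg0, (hζ 1).ne'] using (hid 1).symm

lemma injective_of_weight_ne_zero (hζ : ∀ n, 0 < ζ n)
    (hlim : Tendsto (fun n : ℕ => (ζ n) ^ ((1 : ℝ) / n)) atTop atTop)
    (hT : ∀ f : HE ζ, ∀ z : ℂ, toFun ζ (T f) z = Υ z * toFun ζ f (ν * z))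
    (hΥ : ∀ z, Υ z ≠ 0) (hν : ν ≠ 0) : Function.Injective T := by
  refine (injective_iff_map_eq_zero T).mpr fun g hg => eq_zero_of_toFun_eq_zero hζ hlim ?_
  funext w
  have hzero := hT g (ν⁻¹ * w)
  rw [hg, toFun_zero, mul_inv_cancel_left₀ hν] at hzero
  exact (mul_eq_zero.mp hzero.symm).resolve_left (hΥ _)

end WeightedComposition

end HE

theorem weighted_composition_coisometry_iff_unitary_general
    (ζ : ℕ → ℝ) (hζ : ∀ n, 0 < ζ n)
    (hlim : Tendsto (fun n : ℕ => (ζ n) ^ ((1 : ℝ) / n)) atTop atTop)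
    (ν : ℂ)
    (Υ : ℂ → ℂ)
    (T : HE ζ →L[ℂ] HE ζ)
    (hT : ∀ f : HE ζ, ∀ z : ℂ, HE.toFun ζ (T f) z = Υ z * HE.toFun ζ f (ν * z)) :
    T.comp (adjoint T) = ContinuousLinearMap.id ℂ (HE ζ) ↔
      (T.comp (adjoint T) = ContinuousLinearMap.id ℂ (HE ζ) ∧
        (adjoint T).comp T = ContinuousLinearMap.id ℂ (HE ζ)) := by
  refine ⟨fun hco => ⟨hco, ?_⟩, And.left⟩
  have hright : Function.RightInverse (adjoint T) T := fun x => by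
    simpa using congrArg (· x) hco
  have hsurj : Function.Surjective T := hright.surjective
  have hinj : Function.Injective T :=
    HE.injective_of_weight_ne_zero hζ hlim hT (HE.weight_ne_zero_of_surjective hζ hT hsurj)
      (HE.symbol_ne_zero_of_surjective hζ hT hsurj)
  exact ContinuousLinearMap.ext (hright.leftInverse_of_injective hinj)

/-- For `Φ z = ν z` with `|ν| ≤ 1` and entire `Υ` with `C_{Υ,Φ}` bounded on `H_E(ζ)`:
`C_{Υ,Φ}` is a co-isometry iff it is unitary. -/
theorem weighted_composition_coisometry_iff_unitary
    (ζ : ℕ → ℝ) (hζ : ∀ n, 0 < ζ n)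
    (hlim : Tendsto (fun n : ℕ => (ζ n) ^ ((1 : ℝ) / n)) atTop atTop)
    (ν : ℂ) (hν : ‖ν‖ ≤ 1)
    (Υ : ℂ → ℂ) (hΥ : Differentiable ℂ Υ)
    (T : HE ζ →L[ℂ] HE ζ)
    (hT : ∀ f : HE ζ, ∀ z : ℂ, HE.toFun ζ (T f) z = Υ z * HE.toFun ζ f (ν * z)) :
    T.comp (adjoint T) = ContinuousLinearMap.id ℂ (HE ζ) ↔
      (T.comp (adjoint T) = ContinuousLinearMap.id ℂ (HE ζ) ∧
        (adjoint T).comp T = ContinuousLinearMap.id ℂ (HE ζ)) :=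
  weighted_composition_coisometry_iff_unitary_general ζ hζ hlim ν Υ T hT
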